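/- If π : V(H) → V(G) is a covering map and G is connected, then all fibers of π have the same cardinality; that is, for any two vertices u, w ∈ V(G), the sets π⁻¹(u) and π⁻¹(w) have the same cardinality. -/

import Mathlib

/-!
Lifting along an edge `u — w` of `G` sends each vertex of the fibre over `u` to its unique
neighbour over `w`. Local injectivity of `π` at that neighbour shows that lifting back along
`w — u` returns the starting vertex, so adjacent fibres are in bijection; connectedness of `G`
propagates this along walks.
-/

namespace SimpleGraph

variable {α β : Type*} {H : SimpleGraph α} {G : SimpleGraph β} {π : α → β}

theorem exists_adj_lift_of_bijOn_neighborSet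
    (cov : ∀ v, Set.BijOn π (H.neighborSet v) (G.neighborSet (π v)))
    {a : α} {u w : β} (ha : π a = u) (huw : G.Adj u w) : ∃ b, H.Adj a b ∧ π b = w :=
  (cov a).surjOn (show G.Adj (π a) w from ha ▸ huw)

/-- The unique neighbour over `w` of a vertex over `u`. -/
noncomputable def fiberLift (cov : ∀ v, Set.BijOn π (H.neighborSet v) (G.neighborSet (π v)))
    {u w : β} (huw : G.Adj u w) (a : π ⁻¹' {u}) : π ⁻¹' {w} :=
  ⟨(exists_adj_lift_of_bijOn_neighborSet cov a.2 huw).choose,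
    (exists_adj_lift_of_bijOn_neighborSet cov a.2 huw).choose_spec.2⟩

theorem adj_fiberLift (cov : ∀ v, Set.BijOn π (H.neighborSet v) (G.neighborSet (π v)))
    {u w : β} (huw : G.Adj u w) (a : π ⁻¹' {u}) : H.Adj a (fiberLift cov huw a) :=
  (exists_adj_lift_of_bijOn_neighborSet cov a.2 huw).choose_spec.1

theorem fiberLift_fiberLift (cov : ∀ v, Set.BijOn π (H.neighborSet v) (G.neighborSet (π v)))
    {u w : β} (huw : G.Adj u w) (a : π ⁻¹' {u}) :
    fiberLift cov huw.symm (fiberLift cov huw a) = a := by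
  set b := fiberLift cov huw a
  have hback : H.Adj b (fiberLift cov huw.symm b) := adj_fiberLift cov huw.symm b
  have hforth : H.Adj b a := (adj_fiberLift cov huw a).symm
  have hfiber : π (fiberLift cov huw.symm b) = π a := by
    rw [(fiberLift cov huw.symm b).2, a.2]
  exact Subtype.ext ((cov b).injOn hback hforth hfiber)

noncomputable def fiberEquivOfAdj
    (cov : ∀ v, Set.BijOn π (H.neighborSet v) (G.neighborSet (π v)))
    {u w : β} (huw : G.Adj u w) : π ⁻¹' {u} ≃ π ⁻¹' {w} where
  toFun := fiberLift cov huw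
  invFun := fiberLift cov huw.symm
  left_inv := fiberLift_fiberLift cov huw
  right_inv := fiberLift_fiberLift cov huw.symm

theorem Reachable.nonempty_fiber_equiv
    (cov : ∀ v, Set.BijOn π (H.neighborSet v) (G.neighborSet (π v)))
    {u w : β} (h : G.Reachable u w) : Nonempty (π ⁻¹' {u} ≃ π ⁻¹' {w}) := by
  obtain ⟨p⟩ := h
  induction p with
  | nil => exact ⟨Equiv.refl _⟩
  | cons huv _ ih => exact ⟨(fiberEquivOfAdj cov huv).trans ih.some⟩

end SimpleGraph

theorem covering_map_fibers_equicardinal_general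
    {α β : Type*}
    (H : SimpleGraph α) (G : SimpleGraph β)
    (π : α → β)
    (cov : ∀ v : α, Set.BijOn π (H.neighborSet v) (G.neighborSet (π v)))
    (hconn : G.Connected) :
    ∀ u w : β, Nat.card (π ⁻¹' {u}) = Nat.card (π ⁻¹' {w}) := fun u w =>
  Nat.card_congr ((hconn u w).nonempty_fiber_equiv cov).some

/-- If `π : V(H) → V(G)` is a surjective covering map of simple graphs and `G` is
connected, then all fibers of `π` have the same cardinality. -/
theorem covering_map_fibers_equicardinal
    {α β : Type*}
    (H : SimpleGraph α) (G : SimpleGraph β)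
    (π : α → β)
    (hom : ∀ u v : α, H.Adj u v → G.Adj (π u) (π v))
    (cov : ∀ v : α, Set.BijOn π (H.neighborSet v) (G.neighborSet (π v)))
    (hsurj : Function.Surjective π)
    (hconn : G.Connected) :
    ∀ u w : β, Nat.card (π ⁻¹' {u}) = Nat.card (π ⁻¹' {w}) :=
  covering_map_fibers_equicardinal_general H G π cov hconn
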